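/- Let G be a toroidal grid diagram of size n representing a knot K. Realize x^UR without reduction mod n as the planar point set {(i+1, σ_X(i)+1) : 0 ≤ i ≤ n−1}, with coordinates in {1,…,n}. Fix a row j; let a and b be the columns of the O-marking and X-marking of row j respectively (so σ_O(a) = σ_X(b) = j), let K_j be the horizontal segment of D(G) between (a+1/2, j+1/2) and (b+1/2, j+1/2), and let x_j = (b+1, j+1) be the point of x^UR at the upper-right corner of the X-marked square of row j. Then J({x_j} − {(a+1/2, j+1/2)}, x^UR − 𝕆) = #{negative crossings of D(G) lying on K_j} − #{positive crossings of D(G) lying on K_j} − #{downward cusps of G among the X-marking and the O-marking of row j}. -/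

import Mathlib

open Finset

noncomputable section

open scoped Classical

/-- A formal rational-coefficient combination of points in the plane. -/
abbrev PtComb := (ℝ × ℝ) →₀ ℚ

/-- `I(A,B)`: the number of pairs `(a, b) ∈ A × B` with `a₁ < b₁` and `a₂ < b₂`,
extended bilinearly to formal combinations of finite point sets. -/
def Ifun (f g : PtComb) : ℚ :=
  ∑ p ∈ f.support, ∑ q ∈ g.support,
    if p.1 < q.1 ∧ p.2 < q.2 then f p * g q else 0

/-- `J(A,B) = (I(A,B) + I(B,A))/2`. -/
def Jfun (f g : PtComb) : ℚ := (Ifun f g + Ifun g f) / 2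

/-- A toroidal grid diagram of size `n`: a pair of permutations `σX`, `σO` of
`{0, …, n-1}` with `σX i ≠ σO i` for all `i`. -/
structure Grid (n : ℕ) where
  σX : Equiv.Perm (Fin n)
  σO : Equiv.Perm (Fin n)
  disj : ∀ i, σX i ≠ σO i

namespace Grid

variable {n : ℕ}

/-- `G` represents a knot: the permutation `σO⁻¹ ∘ σX` has a single orbit,
i.e. it is an `n`-cycle. -/
def RepKnot (G : Grid n) : Prop :=
  ∀ i j : Fin n, ∃ k : ℕ, ((G.σO⁻¹ * G.σX) ^ k) i = j

/-- The `X`-marking of column `i`, at the planar point `(i + 1/2, σX i + 1/2)`. -/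
def Xpt (G : Grid n) (i : Fin n) : ℝ × ℝ :=
  (((i : ℕ) : ℝ) + 1/2, ((G.σX i : ℕ) : ℝ) + 1/2)

/-- The `O`-marking of column `i`, at the planar point `(i + 1/2, σO i + 1/2)`. -/
def Opt (G : Grid n) (i : Fin n) : ℝ × ℝ :=
  (((i : ℕ) : ℝ) + 1/2, ((G.σO i : ℕ) : ℝ) + 1/2)

/-- The set `𝕏` of `X`-markings, as a formal point combination. -/
def XX (G : Grid n) : PtComb := ∑ i : Fin n, Finsupp.single (G.Xpt i) 1

/-- The set `𝕆` of `O`-markings, as a formal point combination. -/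
def OO (G : Grid n) : PtComb := ∑ i : Fin n, Finsupp.single (G.Opt i) 1

/-- The point set `{(i, x i)}` of a generator `x`, as a formal point combination. -/
def pts (x : Equiv.Perm (Fin n)) : PtComb :=
  ∑ i : Fin n, Finsupp.single (((i : ℕ) : ℝ), ((x i : ℕ) : ℝ)) 1

/-- The Maslov grading `M(x) = J(x − 𝕆, x − 𝕆) + 1`. -/
def M (G : Grid n) (x : Equiv.Perm (Fin n)) : ℚ :=
  Jfun (pts x - G.OO) (pts x - G.OO) + 1

/-- The `X`-Maslov grading `M_𝕏(x) = J(x − 𝕏, x − 𝕏) + 1`. -/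
def MX (G : Grid n) (x : Equiv.Perm (Fin n)) : ℚ :=
  Jfun (pts x - G.XX) (pts x - G.XX) + 1

/-- The Alexander grading `A(x) = J(x − (𝕏+𝕆)/2, 𝕏 − 𝕆) − (n−1)/2`. -/
def A (G : Grid n) (x : Equiv.Perm (Fin n)) : ℚ :=
  Jfun (pts x - (2 : ℚ)⁻¹ • (G.XX + G.OO)) (G.XX - G.OO) - ((n : ℚ) - 1) / 2

/-- The canonical generator `x^LL`, whose points are the lower-left corners of the
`X`-marked squares. -/
def xLL (G : Grid n) : Equiv.Perm (Fin n) := G.σX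

/-- The canonical generator `x^UR`, `x^UR(i) = σX((i−1) mod n) + 1 (mod n)`, whose points
are the upper-right corners of the `X`-marked squares (reduced mod `n`). -/
def xUR [NeZero n] (G : Grid n) : Equiv.Perm (Fin n) where
  toFun i := G.σX (i - 1) + 1
  invFun i := G.σX.symm (i - 1) + 1
  left_inv i := by simp
  right_inv i := by simp

end Grid

namespace Grid

variable {n : ℕ}

/-- The vertical segment of column `i` (from `X_i` to `O_i`) and the horizontal segment
of row `j` (from the `O` of row `j` to the `X` of row `j`) cross transversally in the
interiors of both segments. -/
def Crossing (G : Grid n) (i j : Fin n) : Prop :=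
  min (G.σX i) (G.σO i) < j ∧ j < max (G.σX i) (G.σO i) ∧
  min (G.σX.symm j) (G.σO.symm j) < i ∧ i < max (G.σX.symm j) (G.σO.symm j)

/-- The sign of the crossing of the vertical segment of column `i` with the horizontal
segment of row `j`: it is `+1` iff `det(v, h) > 0`, where `v` points from `X_i` to `O_i`
and `h` points from the `O`-marking of row `j` to its `X`-marking. -/
def crossSign (G : Grid n) (i j : Fin n) : ℤ :=
  if ((G.σX i < G.σO i) ↔ (G.σO.symm j < G.σX.symm j)) then -1 else 1

/-- The writhe of the planar diagram `D(G)`: the sum of the signs of all crossings. -/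
def writhe (G : Grid n) : ℤ :=
  ∑ p : Fin n × Fin n, if G.Crossing p.1 p.2 then G.crossSign p.1 p.2 else 0

/-- `X_i` is a NE corner: the `O`-marking of its row lies strictly to its left, and
`σO i < σX i`. -/
def XNE (G : Grid n) (i : Fin n) : Prop :=
  G.σO.symm (G.σX i) < i ∧ G.σO i < G.σX i

/-- `X_i` is a SW corner: the `O`-marking of its row lies strictly to its right, and
`σO i > σX i`. -/
def XSW (G : Grid n) (i : Fin n) : Prop :=
  i < G.σO.symm (G.σX i) ∧ G.σX i < G.σO i

/-- `O_i` is a NE corner: the `X`-marking of its row lies strictly to its left, and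
`σX i < σO i`. -/
def ONE (G : Grid n) (i : Fin n) : Prop :=
  G.σX.symm (G.σO i) < i ∧ G.σX i < G.σO i

/-- `O_i` is a SW corner: the `X`-marking of its row lies strictly to its right, and
`σX i > σO i`. -/
def OSW (G : Grid n) (i : Fin n) : Prop :=
  i < G.σX.symm (G.σO i) ∧ G.σO i < G.σX i

/-- The number of downward-oriented cusps: `X`-markings that are NE corners together
with `O`-markings that are SW corners. -/
def downCusps (G : Grid n) : ℕ :=
  (univ.filter fun i => G.XNE i).card + (univ.filter fun i => G.OSW i).card

/-- The number of upward-oriented cusps: `O`-markings that are NE corners together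
with `X`-markings that are SW corners. -/
def upCusps (G : Grid n) : ℕ :=
  (univ.filter fun i => G.ONE i).card + (univ.filter fun i => G.XSW i).card

/-- The total number of cusps (markings that are NE or SW corners). -/
def cusps (G : Grid n) : ℕ := G.downCusps + G.upCusps

/-- The Thurston–Bennequin invariant of the Legendrian knot associated to `G`:
`tb = −writhe − (1/2)·#cusps`. -/
def tb (G : Grid n) : ℚ := -(G.writhe : ℚ) - (G.cusps : ℚ) / 2

/-- The rotation number of the oriented Legendrian knot associated to `G`:
`r = (1/2)·(#downward cusps − #upward cusps)`. -/
def rot (G : Grid n) : ℚ := ((G.downCusps : ℚ) - (G.upCusps : ℚ)) / 2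

end Grid

namespace Grid

variable {n : ℕ}

/-- The canonical generator `x^UR` realized *without* reduction mod `n`, as the planar
point set `{(i+1, σX i + 1) : 0 ≤ i ≤ n−1}`, with coordinates in `{1, …, n}`. -/
def ptsURunred (G : Grid n) : PtComb :=
  ∑ i : Fin n, Finsupp.single (((i : ℕ) : ℝ) + 1, ((G.σX i : ℕ) : ℝ) + 1) 1

/-- The number of positive crossings of `D(G)` lying on the horizontal segment of
row `j`. -/
def posCrossRow (G : Grid n) (j : Fin n) : ℕ :=
  (univ.filter fun i => G.Crossing i j ∧ G.crossSign i j = 1).card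

/-- The number of negative crossings of `D(G)` lying on the horizontal segment of
row `j`. -/
def negCrossRow (G : Grid n) (j : Fin n) : ℕ :=
  (univ.filter fun i => G.Crossing i j ∧ G.crossSign i j = -1).card

/-- The number of downward cusps of `G` among the `X`-marking and the `O`-marking of
row `j`. -/
def downCuspsRow (G : Grid n) (j : Fin n) : ℕ :=
  (if G.XNE (G.σX.symm j) then 1 else 0) + (if G.OSW (G.σO.symm j) then 1 else 0)

end Grid


section Aux

lemma castL1 (x y : ℕ) : ((x:ℝ) + 1 < (y:ℝ) + 1) ↔ x < y := by
  constructor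
  · intro h
    exact_mod_cast (by linarith : (x:ℝ) < (y:ℝ))
  · intro h
    have : (x:ℝ) < (y:ℝ) := by exact_mod_cast h
    linarith

lemma castL2 (x y : ℕ) : ((x:ℝ) + 1 < (y:ℝ) + 1/2) ↔ x < y := by
  constructor
  · intro h
    exact_mod_cast (by linarith : (x:ℝ) < (y:ℝ))
  · intro h
    have h' : x + 1 ≤ y := h
    have : (x:ℝ) + 1 ≤ (y:ℝ) := by exact_mod_cast h'
    linarith

lemma castL3 (x y : ℕ) : ((x:ℝ) + 1/2 < (y:ℝ) + 1) ↔ x ≤ y := by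
  constructor
  · intro h
    have h1 : (x:ℝ) < (y:ℝ) + 1 := by linarith
    have h2 : x < y + 1 := by exact_mod_cast h1
    omega
  · intro h
    have : (x:ℝ) ≤ (y:ℝ) := by exact_mod_cast h
    linarith

lemma castL4 (x y : ℕ) : ((x:ℝ) + 1/2 < (y:ℝ) + 1/2) ↔ x < y := by
  constructor
  · intro h
    exact_mod_cast (by linarith : (x:ℝ) < (y:ℝ))
  · intro h
    have : (x:ℝ) < (y:ℝ) := by exact_mod_cast h
    linarith

lemma Ifun_eq_sum (f g : PtComb) (S T : Finset (ℝ × ℝ)) (hS : f.support ⊆ S)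
    (hT : g.support ⊆ T) :
    Ifun f g = ∑ p ∈ S, ∑ q ∈ T, if p.1 < q.1 ∧ p.2 < q.2 then f p * g q else 0 := by
  unfold Ifun
  rw [Finset.sum_subset hS (fun p _ hp => by
    simp [Finsupp.notMem_support_iff.1 hp])]
  refine Finset.sum_congr rfl fun p _ => Finset.sum_subset hT fun q _ hq => by
    simp [Finsupp.notMem_support_iff.1 hq]

lemma fin_val_min {n : ℕ} (x y : Fin n) : ((min x y : Fin n) : ℕ) = min (x:ℕ) (y:ℕ) := by
  rcases le_total x y with h | h
  · rw [min_eq_left h, min_eq_left (Fin.le_def.mp h)]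
  · rw [min_eq_right h, min_eq_right (Fin.le_def.mp h)]

lemma fin_val_max {n : ℕ} (x y : Fin n) : ((max x y : Fin n) : ℕ) = max (x:ℕ) (y:ℕ) := by
  rcases le_total x y with h | h
  · rw [max_eq_right h, max_eq_right (Fin.le_def.mp h)]
  · rw [max_eq_left h, max_eq_left (Fin.le_def.mp h)]

namespace Grid

variable {n : ℕ}

/-- The unreduced upper-right point of column `i`. -/
def Ppt (G : Grid n) (i : Fin n) : ℝ × ℝ := (((i : ℕ) : ℝ) + 1, ((G.σX i : ℕ) : ℝ) + 1)

lemma ptsURunred_eq (G : Grid n) :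
    G.ptsURunred = ∑ i : Fin n, Finsupp.single (G.Ppt i) 1 := rfl

lemma Ppt_inj (G : Grid n) : Function.Injective G.Ppt := by
  intro i k h
  have h1 : ((i:ℕ):ℝ) + 1 = ((k:ℕ):ℝ) + 1 := congrArg Prod.fst h
  have h2 : (i:ℕ) = (k:ℕ) := by exact_mod_cast (by linarith : ((i:ℕ):ℝ) = ((k:ℕ):ℝ))
  exact Fin.val_injective h2

lemma Opt_inj (G : Grid n) : Function.Injective G.Opt := by
  intro i k h
  have h1 : ((i:ℕ):ℝ) + 1/2 = ((k:ℕ):ℝ) + 1/2 := congrArg Prod.fst h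
  have h2 : (i:ℕ) = (k:ℕ) := by exact_mod_cast (by linarith : ((i:ℕ):ℝ) = ((k:ℕ):ℝ))
  exact Fin.val_injective h2

lemma Ppt_ne_Opt (G : Grid n) (i k : Fin n) : G.Ppt i ≠ G.Opt k := by
  intro h
  have h1 : ((i:ℕ):ℝ) + 1 = ((k:ℕ):ℝ) + 1/2 := congrArg Prod.fst h
  have h2 : ((2*(i:ℕ)+2 : ℕ):ℝ) = ((2*(k:ℕ)+1 : ℕ):ℝ) := by push_cast; linarith
  have h3 : 2*(i:ℕ)+2 = 2*(k:ℕ)+1 := by exact_mod_cast h2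
  omega

lemma g_apply_Ppt (G : Grid n) (i : Fin n) : (G.ptsURunred - G.OO) (G.Ppt i) = 1 := by
  have h1 : G.ptsURunred (G.Ppt i) = 1 := by
    rw [ptsURunred_eq, Finsupp.finset_sum_apply]
    simp [Finsupp.single_apply, G.Ppt_inj.eq_iff]
  have h2 : G.OO (G.Ppt i) = 0 := by
    rw [OO, Finsupp.finset_sum_apply]
    refine Finset.sum_eq_zero fun k _ => ?_
    rw [Finsupp.single_apply, if_neg fun h => G.Ppt_ne_Opt i k h.symm]
  rw [Finsupp.sub_apply, h1, h2]
  norm_num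

lemma g_apply_Opt (G : Grid n) (i : Fin n) : (G.ptsURunred - G.OO) (G.Opt i) = -1 := by
  have h1 : G.ptsURunred (G.Opt i) = 0 := by
    rw [ptsURunred_eq, Finsupp.finset_sum_apply]
    refine Finset.sum_eq_zero fun k _ => ?_
    rw [Finsupp.single_apply, if_neg (G.Ppt_ne_Opt k i)]
  have h2 : G.OO (G.Opt i) = 1 := by
    rw [OO, Finsupp.finset_sum_apply]
    simp [Finsupp.single_apply, G.Opt_inj.eq_iff]
  rw [Finsupp.sub_apply, h1, h2]
  norm_num

lemma g_support (G : Grid n) :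
    (G.ptsURunred - G.OO).support ⊆ (univ.image G.Ppt) ∪ (univ.image G.Opt) := by
  intro q hq
  rw [Finsupp.mem_support_iff] at hq
  by_contra hq'
  apply hq
  simp only [Finset.mem_union, Finset.mem_image, Finset.mem_univ, true_and, not_or,
    not_exists] at hq'
  obtain ⟨h1, h2⟩ := hq'
  have hA : G.ptsURunred q = 0 := by
    rw [ptsURunred_eq, Finsupp.finset_sum_apply]
    exact Finset.sum_eq_zero fun k _ => by rw [Finsupp.single_apply, if_neg (h1 k)]
  have hB : G.OO q = 0 := by
    rw [OO, Finsupp.finset_sum_apply]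
    exact Finset.sum_eq_zero fun k _ => by rw [Finsupp.single_apply, if_neg (h2 k)]
  rw [Finsupp.sub_apply, hA, hB]
  ring

end Grid

end Aux

set_option maxHeartbeats 3000000 in
/-- Let `G` be a toroidal grid diagram of size `n` representing a knot.
Fix a row `j`, let `a` and `b` be the columns of the `O`- and `X`-markings of row `j`,
and let `x_j = (b+1, j+1)` be the point of the unreduced `x^UR` at the upper-right corner
of the `X`-marked square of row `j`.  Then
`J({x_j} − {O_a}, x^UR − 𝕆)` equals the number of negative crossings on the horizontal
segment `K_j` minus the number of positive crossings on `K_j` minus the number of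
downward cusps of `G` among the markings of row `j`. -/
theorem row_contribution {n : ℕ} [NeZero n] (hn : 2 ≤ n) (G : Grid n) (hK : G.RepKnot)
    (j : Fin n) :
    Jfun
      (Finsupp.single (((G.σX.symm j : ℕ) : ℝ) + 1, ((j : ℕ) : ℝ) + 1) 1
        - Finsupp.single (((G.σO.symm j : ℕ) : ℝ) + 1/2, ((j : ℕ) : ℝ) + 1/2) 1)
      (G.ptsURunred - G.OO)
    = (G.negCrossRow j : ℚ) - (G.posCrossRow j : ℚ) - (G.downCuspsRow j : ℚ) := by
  classical
  set a := G.σO.symm j with ha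
  set b := G.σX.symm j with hb
  have hXb : G.σX b = j := by rw [hb]; exact G.σX.apply_symm_apply j
  have hOa : G.σO a = j := by rw [ha]; exact G.σO.apply_symm_apply j
  have hab : a ≠ b := by
    intro h
    rw [h] at hOa
    exact G.disj b (hXb.trans hOa.symm)
  set u : ℝ × ℝ := (((b : ℕ) : ℝ) + 1, ((j : ℕ) : ℝ) + 1) with hu
  set v : ℝ × ℝ := (((a : ℕ) : ℝ) + 1/2, ((j : ℕ) : ℝ) + 1/2) with hv
  have huv : u ≠ v := by
    rw [hu, hv]
    intro h
    have h2 : ((j:ℕ):ℝ) + 1 = ((j:ℕ):ℝ) + 1/2 := congrArg Prod.snd h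
    norm_num at h2
  set T : Finset (ℝ × ℝ) := (univ.image G.Ppt) ∪ (univ.image G.Opt) with hT
  have hdisj : Disjoint (univ.image G.Ppt) (univ.image G.Opt) := by
    rw [Finset.disjoint_left]
    intro x hx hx'
    simp only [Finset.mem_image, Finset.mem_univ, true_and] at hx hx'
    obtain ⟨i, hi⟩ := hx
    obtain ⟨k, hk⟩ := hx'
    exact G.Ppt_ne_Opt i k (hi.trans hk.symm)
  have hfsupp : (Finsupp.single u 1 - Finsupp.single v 1 : PtComb).support ⊆ {u, v} := by
    intro q hq
    rw [Finsupp.mem_support_iff] at hq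
    by_contra hq'
    apply hq
    simp only [Finset.mem_insert, Finset.mem_singleton, not_or] at hq'
    rw [Finsupp.sub_apply, Finsupp.single_apply, Finsupp.single_apply,
      if_neg (fun h => hq'.1 h.symm), if_neg (fun h => hq'.2 h.symm)]
    ring
  have hgsupp : (G.ptsURunred - G.OO).support ⊆ T := by
    rw [hT]; exact G.g_support
  have hTsum : ∀ F : ℝ × ℝ → ℚ,
      ∑ q ∈ T, F q = (∑ i : Fin n, F (G.Ppt i)) + ∑ i : Fin n, F (G.Opt i) := by
    intro F
    rw [hT, Finset.sum_union hdisj, Finset.sum_image (fun x _ y _ h => G.Ppt_inj h),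
      Finset.sum_image (fun x _ y _ h => G.Opt_inj h)]
  have hUV : ∀ F : ℝ × ℝ → ℚ, ∑ p ∈ ({u, v} : Finset (ℝ × ℝ)), F p = F u + F v :=
    fun F => Finset.sum_pair huv
  have hfu : (Finsupp.single u 1 - Finsupp.single v 1 : PtComb) u = 1 := by
    rw [Finsupp.sub_apply, Finsupp.single_apply, Finsupp.single_apply, if_pos rfl,
      if_neg (fun h => huv h.symm)]
    first | omega | norm_num
  have hfv : (Finsupp.single u 1 - Finsupp.single v 1 : PtComb) v = -1 := by
    rw [Finsupp.sub_apply, Finsupp.single_apply, Finsupp.single_apply, if_pos rfl,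
      if_neg huv]
    first | omega | norm_num
  rw [Jfun, Ifun_eq_sum _ _ {u, v} T hfsupp hgsupp, Ifun_eq_sum _ _ T {u, v} hgsupp hfsupp,
    div_eq_iff (two_ne_zero)]
  simp only [hUV, hTsum]
  simp only [hfu, hfv, Grid.g_apply_Ppt, Grid.g_apply_Opt, mul_one, one_mul, neg_mul,
    mul_neg, neg_neg]
  simp only [Grid.Ppt, Grid.Opt, hu, hv, castL1, castL2, castL3, castL4]
  have hsgnN : ∀ i : Fin n,
      G.crossSign i j = -1 ↔ ((G.σX i : ℕ) < (G.σO i : ℕ) ↔ (a : ℕ) < (b : ℕ)) := by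
    intro i
    simp only [Grid.crossSign, ← ha, ← hb]
    by_cases h : (G.σX i < G.σO i ↔ a < b)
    · rw [if_pos h]
      simp only [Fin.lt_def] at h
      exact iff_of_true rfl h
    · rw [if_neg h]
      simp only [Fin.lt_def] at h
      exact iff_of_false (by norm_num) h
  have hsgnP : ∀ i : Fin n,
      G.crossSign i j = 1 ↔ ¬((G.σX i : ℕ) < (G.σO i : ℕ) ↔ (a : ℕ) < (b : ℕ)) := by
    intro i
    simp only [Grid.crossSign, ← ha, ← hb]
    by_cases h : (G.σX i < G.σO i ↔ a < b)
    · rw [if_pos h]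
      simp only [Fin.lt_def] at h
      exact iff_of_false (by norm_num) (not_not_intro h)
    · rw [if_neg h]
      simp only [Fin.lt_def] at h
      exact iff_of_true rfl h
  have hneg : (G.negCrossRow j : ℚ) = ∑ i : Fin n,
      (if G.Crossing i j ∧ ((G.σX i : ℕ) < (G.σO i : ℕ) ↔ (a : ℕ) < (b : ℕ))
        then (1:ℚ) else 0) := by
    rw [Grid.negCrossRow, Finset.card_filter, Nat.cast_sum]
    refine Finset.sum_congr rfl fun i _ => ?_
    simp only [hsgnN]
    split_ifs <;> simp
  have hposR : (G.posCrossRow j : ℚ) = ∑ i : Fin n,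
      (if G.Crossing i j ∧ ¬((G.σX i : ℕ) < (G.σO i : ℕ) ↔ (a : ℕ) < (b : ℕ))
        then (1:ℚ) else 0) := by
    rw [Grid.posCrossRow, Finset.card_filter, Nat.cast_sum]
    refine Finset.sum_congr rfl fun i _ => ?_
    simp only [hsgnP]
    split_ifs <;> simp
  have hdown : (G.downCuspsRow j : ℚ) = ∑ i : Fin n,
      ((if i = b then (if G.XNE b then (1:ℚ) else 0) else 0) +
       (if i = a then (if G.OSW a then (1:ℚ) else 0) else 0)) := by
    rw [Finset.sum_add_distrib, Finset.sum_ite_eq' univ b, Finset.sum_ite_eq' univ a]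
    simp [Grid.downCuspsRow, ← ha, ← hb, apply_ite (Nat.cast : ℕ → ℚ)]
  rw [hneg, hposR, hdown, ← Finset.sum_sub_distrib, ← Finset.sum_sub_distrib,
    Finset.sum_mul]
  simp only [← Finset.sum_add_distrib]
  clear hdown hposR hneg hsgnP hsgnN hfv hfu hUV hTsum hgsupp hfsupp hdisj hT T huv hv v hu u hK hn
  clear_value a b
  refine Finset.sum_congr rfl fun i _ => ?_
  have hXO : (G.σX i : ℕ) ≠ (G.σO i : ℕ) := fun h => G.disj i (Fin.val_injective h)
  have habv : (a : ℕ) ≠ (b : ℕ) := fun h => hab (Fin.val_injective h)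
  rcases eq_or_ne i b with rfl | hib
  · rw [hXb] at hXO
    simp only [Grid.Crossing, Grid.XNE, Grid.OSW, ← ha, ← hb, hXb, hOa, Fin.lt_def,
      fin_val_min, fin_val_max]
    rcases lt_or_gt_of_ne hXO with h2 | h2 <;>
    rcases lt_or_gt_of_ne habv with h3 | h3 <;>
    simp [Ne.symm hab, h2, h2.le, h2.not_gt, h2.not_ge, h2.ne, h2.ne',
      h3, h3.le, h3.not_gt, h3.not_ge, h3.ne, h3.ne',
      min_eq_left, min_eq_right, max_eq_left, max_eq_right] <;>
    first | omega | norm_num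
  rcases eq_or_ne i a with rfl | hia
  · rw [hOa] at hXO
    simp only [Grid.Crossing, Grid.XNE, Grid.OSW, ← ha, ← hb, hXb, hOa, Fin.lt_def,
      fin_val_min, fin_val_max]
    rcases lt_or_gt_of_ne hXO with h2 | h2 <;>
    rcases lt_or_gt_of_ne habv with h3 | h3 <;>
    simp [hab, h2, h2.le, h2.not_gt, h2.not_ge, h2.ne, h2.ne',
      h3, h3.le, h3.not_gt, h3.not_ge, h3.ne, h3.ne',
      min_eq_left, min_eq_right, max_eq_left, max_eq_right] <;>
    first | omega | norm_num
  · have hXi : (G.σX i : ℕ) ≠ (j : ℕ) :=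
      fun h => hib (G.σX.injective ((Fin.val_injective h).trans hXb.symm))
    have hOi : (G.σO i : ℕ) ≠ (j : ℕ) :=
      fun h => hia (G.σO.injective ((Fin.val_injective h).trans hOa.symm))
    have hiav : (i : ℕ) ≠ (a : ℕ) := fun h => hia (Fin.val_injective h)
    have hibv : (i : ℕ) ≠ (b : ℕ) := fun h => hib (Fin.val_injective h)
    simp only [Grid.Crossing, Grid.XNE, Grid.OSW, ← ha, ← hb, hXb, hOa, Fin.lt_def,
      fin_val_min, fin_val_max, hia, hib, if_false]
    rcases lt_or_gt_of_ne hXi with h1 | h1 <;>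
    rcases lt_or_gt_of_ne hOi with h2 | h2 <;>
    rcases lt_or_gt_of_ne hiav with h3 | h3 <;>
    rcases lt_or_gt_of_ne hibv with h4 | h4 <;>
    rcases lt_or_gt_of_ne hXO with h5 | h5 <;>
    rcases lt_or_gt_of_ne habv with h6 | h6 <;>
    simp [h1, h1.le, h1.not_gt, h1.not_ge, h2, h2.le, h2.not_gt, h2.not_ge,
      h3, h3.le, h3.not_gt, h3.not_ge, h4, h4.le, h4.not_gt, h4.not_ge,
      h5, h5.le, h5.not_gt, h5.not_ge, h6, h6.le, h6.not_gt, h6.not_ge,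
      min_eq_left, min_eq_right, max_eq_left, max_eq_right] <;>
    first | omega | norm_num
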